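/- Let d ≥ 1 and let u : ℝ^d → ℝ be a smooth non-negative function on Euclidean space ℝ^d. If there exists a constant c > 0 such that Δu(x) ≥ c·u(x)² for every x ∈ ℝ^d, where Δ denotes the Euclidean Laplacian, then u vanishes identically on ℝ^d. -/

import Mathlib

/-!
Osserman's barrier argument. On a ball `B(x₀, R)` the function
`V z = A / (R² - |z - x₀|²)²` with `A = (4d + 24) R² / c` satisfies `ΔV ≤ c V²` and blows up at
the boundary, so `u - V` attains its maximum at an interior point `xm`. There `Δu ≤ ΔV`, hence
`c u² ≤ c V²` and `u ≤ V` at `xm`, and therefore on the whole ball. At the centre this reads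
`u x₀ ≤ (4d + 24) / (c R²)`, which tends to `0` as `R → ∞`.
-/

open Filter Topology Metric Laplacian InnerProductSpace Module
open scoped RealInnerProductSpace

theorem IsLocalMax.deriv_deriv_nonpos {g : ℝ → ℝ} {a : ℝ} (hmax : IsLocalMax g a)
    (hg : ContinuousAt g a) : deriv (deriv g) a ≤ 0 := by
  by_contra! hpos
  have hmin : IsLocalMin g a := isLocalMin_of_deriv_deriv_pos hpos hmax.deriv_eq_zero hg
  have hconst : g =ᶠ[𝓝 a] fun _ => g a := by
    filter_upwards [hmax, hmin] with t h₁ h₂ using le_antisymm h₁ h₂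
  have hderiv : deriv g =ᶠ[𝓝 a] fun _ => 0 := by
    filter_upwards [hconst.eventuallyEq_nhds] with t ht
    rw [ht.deriv_eq, deriv_const]
  rw [hderiv.deriv_eq, deriv_const] at hpos
  exact lt_irrefl _ hpos

theorem exists_isMaxOn_ball_of_lt {α : Type*} [PseudoMetricSpace α] [ProperSpace α]
    {f : α → ℝ} {x₀ : α} {r R : ℝ} (hR : 0 < R) (hf : ContinuousOn f (ball x₀ R)) (hrR : r < R)
    (hout : ∀ z ∈ ball x₀ R, r < dist z x₀ → f z < f x₀) :
    ∃ xm ∈ ball x₀ R, IsMaxOn f (ball x₀ R) xm := by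
  have hr : 0 ≤ r := by
    by_contra! hr
    exact lt_irrefl _ (hout x₀ (mem_ball_self hR) (by simpa using hr))
  have hsub : closedBall x₀ r ⊆ ball x₀ R := closedBall_subset_ball hrR
  obtain ⟨xm, hxm, hmax⟩ := (isCompact_closedBall x₀ r).exists_isMaxOn
    ⟨x₀, mem_closedBall_self hr⟩ (hf.mono hsub)
  refine ⟨xm, hsub hxm, fun z hz => ?_⟩
  by_cases hzr : dist z x₀ ≤ r
  · exact hmax hzr
  · exact ((hout z hz (not_le.1 hzr)).trans_le (hmax (mem_closedBall_self hr))).le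

section SecondDerivative

variable {E : Type*} [NormedAddCommGroup E] [NormedSpace ℝ E]

theorem ContDiffAt.differentiableAt_fderiv_apply {f : E → ℝ} {x : E} (hf : ContDiffAt ℝ 2 f x)
    (v : E) : DifferentiableAt ℝ (fun y => fderiv ℝ f y v) x :=
  ((hf.fderiv_right (m := 1) (by norm_num)).differentiableAt one_ne_zero).clm_apply
    (differentiableAt_const v)

theorem IsLocalMax.fderiv_fderiv_apply_nonpos {f : E → ℝ} {x : E} (hmax : IsLocalMax f x)
    (hf : ContDiffAt ℝ 2 f x) (v : E) : fderiv ℝ (fun y => fderiv ℝ f y v) x v ≤ 0 := by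
  set ℓ : ℝ → E := fun t => x + t • v
  have hℓ0 : ℓ 0 = x := by simp [ℓ]
  have hℓ : ∀ t, HasDerivAt ℓ v t := fun t =>
    (((hasDerivAt_id t).smul_const v).const_add x).congr_deriv (one_smul ℝ v)
  have hdiff : ∀ᶠ y in 𝓝 x, DifferentiableAt ℝ f y :=
    (hf.eventually (by simp)).mono fun y hy => hy.differentiableAt (by norm_num)
  have hderiv : deriv (f ∘ ℓ) =ᶠ[𝓝 0] fun t => fderiv ℝ f (ℓ t) v := by
    have hlim : Tendsto ℓ (𝓝 0) (𝓝 x) := hℓ0 ▸ (hℓ 0).continuousAt.tendsto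
    filter_upwards [hlim.eventually hdiff] with t ht
    exact (ht.hasFDerivAt.comp_hasDerivAt t (hℓ t)).deriv
  have hsecond : HasDerivAt (fun t => fderiv ℝ f (ℓ t) v)
      (fderiv ℝ (fun y => fderiv ℝ f y v) x v) 0 := by
    have h := (hf.differentiableAt_fderiv_apply v).hasFDerivAt
    rw [← hℓ0] at h ⊢
    exact h.comp_hasDerivAt 0 (hℓ 0)
  have hmax' : IsLocalMax (f ∘ ℓ) 0 := (hℓ0 ▸ hmax).comp_continuous (hℓ 0).continuousAt
  have := hmax'.deriv_deriv_nonpos ((hℓ0 ▸ hf.continuousAt).comp (hℓ 0).continuousAt)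
  rwa [hderiv.deriv_eq, hsecond.deriv] at this

end SecondDerivative

section Laplacian

variable {E : Type*} [NormedAddCommGroup E] [InnerProductSpace ℝ E] [FiniteDimensional ℝ E]

theorem ContDiffAt.laplacian_eq_sum_fderiv_fderiv_apply {F : Type*} [NormedAddCommGroup F]
    [NormedSpace ℝ F] {ι : Type*} [Fintype ι] (b : OrthonormalBasis ι ℝ E) {f : E → F} {x : E}
    (hf : ContDiffAt ℝ 2 f x) :
    Δ f x = ∑ i, fderiv ℝ (fun y => fderiv ℝ f y (b i)) x (b i) := by
  have hf' : DifferentiableAt ℝ (fderiv ℝ f) x :=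
    (hf.fderiv_right (m := 1) (by norm_num)).differentiableAt one_ne_zero
  rw [laplacian_eq_iteratedFDeriv_orthonormalBasis f b]
  refine Finset.sum_congr rfl fun i _ => ?_
  rw [iteratedFDeriv_two_apply, fderiv_clm_apply hf' (differentiableAt_const _)]
  simp

theorem IsLocalMax.laplacian_nonpos {f : E → ℝ} {x : E} (hmax : IsLocalMax f x)
    (hf : ContDiffAt ℝ 2 f x) : Δ f x ≤ 0 := by
  rw [hf.laplacian_eq_sum_fderiv_fderiv_apply (stdOrthonormalBasis ℝ E)]
  exact Finset.sum_nonpos fun i _ => hmax.fderiv_fderiv_apply_nonpos hf _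

end Laplacian

section RadialCalculus

variable {E : Type*} [NormedAddCommGroup E] [InnerProductSpace ℝ E]

theorem hasFDerivAt_inv_pow_sub_norm_sub_sq (n : ℕ) (a : ℝ) (x₀ : E) {y : E}
    (hy : a - ‖y - x₀‖ ^ 2 ≠ 0) :
    HasFDerivAt (fun z => ((a - ‖z - x₀‖ ^ 2) ^ n)⁻¹)
      ((2 * n * ((a - ‖y - x₀‖ ^ 2) ^ (n + 1))⁻¹) • innerSL ℝ (y - x₀)) y := by
  have hφ : HasDerivAt (fun t => ((a - t) ^ n)⁻¹) (n * ((a - ‖y - x₀‖ ^ 2) ^ (n + 1))⁻¹)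
      (‖y - x₀‖ ^ 2) := by
    refine ((((hasDerivAt_id _).const_sub a).pow n).inv (pow_ne_zero n hy)).congr_deriv ?_
    rcases n with _ | n
    · simp
    · simp only [id, Pi.pow_apply, Nat.add_sub_cancel]
      field_simp
      ring
  refine (hφ.comp_hasFDerivAt y ((hasFDerivAt_id y).sub_const x₀).norm_sq).congr_fderiv ?_
  ext v
  simp
  ring

end RadialCalculus

section Barrier

variable {E : Type*} [NormedAddCommGroup E]

theorem sub_norm_sub_sq_pos {x₀ z : E} {R : ℝ} (hz : z ∈ ball x₀ R) :
    0 < R ^ 2 - ‖z - x₀‖ ^ 2 := by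
  have := mem_ball_iff_norm.1 hz
  nlinarith [norm_nonneg (z - x₀)]

noncomputable def barrier (x₀ : E) (R A : ℝ) (z : E) : ℝ :=
  A * ((R ^ 2 - ‖z - x₀‖ ^ 2) ^ 2)⁻¹

variable {x₀ : E} {R A : ℝ}

theorem exists_lt_barrier (hR : 0 < R) (hA : 0 < A) (B : ℝ) :
    ∃ r < R, ∀ z ∈ ball x₀ R, r < dist z x₀ → B < barrier x₀ R A z := by
  have hgap : Tendsto (fun t => (R ^ 2 - t ^ 2) ^ 2) (𝓝[<] R) (𝓝[>] 0) := by
    refine tendsto_nhdsWithin_iff.2 ⟨?_, ?_⟩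
    · exact ((by fun_prop : Continuous fun t : ℝ => (R ^ 2 - t ^ 2) ^ 2).tendsto' R 0
        (by simp)).mono_left nhdsWithin_le_nhds
    · filter_upwards [Ioo_mem_nhdsLT hR] with t ht
      have : 0 < R ^ 2 - t ^ 2 := by nlinarith [ht.1, ht.2]
      exact pow_pos this 2
  have hblow := (tendsto_inv_nhdsGT_zero.comp hgap).const_mul_atTop hA
  obtain ⟨r, hrR, hr⟩ := mem_nhdsLT_iff_exists_Ioo_subset.1 (hblow.eventually_gt_atTop B)
  refine ⟨r, hrR, fun z hz hrz => ?_⟩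
  rw [dist_eq_norm] at hrz
  exact hr ⟨hrz, mem_ball_iff_norm.1 hz⟩

variable [InnerProductSpace ℝ E]

theorem contDiffAt_barrier {z : E} (hz : z ∈ ball x₀ R) :
    ContDiffAt ℝ 2 (barrier x₀ R A) z := by
  have hnorm : ContDiff ℝ 2 fun y : E => ‖y - x₀‖ ^ 2 :=
    (contDiff_norm_sq ℝ).comp (contDiff_id.sub contDiff_const)
  exact contDiffAt_const.mul (((contDiffAt_const.sub hnorm.contDiffAt).pow 2).inv
    (pow_pos (sub_norm_sub_sq_pos hz) 2).ne')

theorem fderiv_barrier_apply {y : E} (hy : y ∈ ball x₀ R) (v : E) :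
    fderiv ℝ (barrier x₀ R A) y v = 4 * A * ((R ^ 2 - ‖y - x₀‖ ^ 2) ^ 3)⁻¹ * ⟪y - x₀, v⟫ := by
  have h : HasFDerivAt (barrier x₀ R A) _ y :=
    (hasFDerivAt_inv_pow_sub_norm_sub_sq 2 _ x₀ (sub_norm_sub_sq_pos hy).ne').const_mul A
  rw [h.fderiv]
  simp [inner_sub_left]
  ring

theorem fderiv_fderiv_barrier_apply {z : E} (hz : z ∈ ball x₀ R) (v : E) :
    fderiv ℝ (fun y => fderiv ℝ (barrier x₀ R A) y v) z v =
      4 * A * ((R ^ 2 - ‖z - x₀‖ ^ 2) ^ 3)⁻¹ * ‖v‖ ^ 2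
        + 24 * A * ((R ^ 2 - ‖z - x₀‖ ^ 2) ^ 4)⁻¹ * ⟪z - x₀, v⟫ ^ 2 := by
  have heq : (fun y => fderiv ℝ (barrier x₀ R A) y v) =ᶠ[𝓝 z]
      fun y => 4 * A * ((R ^ 2 - ‖y - x₀‖ ^ 2) ^ 3)⁻¹ * ⟪y - x₀, v⟫ := by
    filter_upwards [isOpen_ball.mem_nhds hz] with y hy using fderiv_barrier_apply hy v
  have hderiv : HasFDerivAt
      (fun y => 4 * A * ((R ^ 2 - ‖y - x₀‖ ^ 2) ^ 3)⁻¹ * ⟪y - x₀, v⟫) _ z :=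
    ((hasFDerivAt_inv_pow_sub_norm_sub_sq 3 _ x₀ (sub_norm_sub_sq_pos hz).ne').const_mul
      (4 * A)).mul (((hasFDerivAt_id z).sub_const x₀).inner ℝ (hasFDerivAt_const v z))
  rw [heq.fderiv_eq, hderiv.fderiv]
  simp [inner_sub_left]
  ring

variable [FiniteDimensional ℝ E]

theorem laplacian_barrier {z : E} (hz : z ∈ ball x₀ R) :
    Δ (barrier x₀ R A) z = 4 * A * finrank ℝ E * ((R ^ 2 - ‖z - x₀‖ ^ 2) ^ 3)⁻¹
      + 24 * A * ((R ^ 2 - ‖z - x₀‖ ^ 2) ^ 4)⁻¹ * ‖z - x₀‖ ^ 2 := by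
  let b := stdOrthonormalBasis ℝ E
  rw [(contDiffAt_barrier hz).laplacian_eq_sum_fderiv_fderiv_apply b]
  simp only [fderiv_fderiv_barrier_apply hz, b.norm_eq_one, Finset.sum_add_distrib,
    ← Finset.mul_sum, b.sum_sq_inner_left]
  simp
  ring

theorem laplacian_barrier_le {c : ℝ} (hc : 0 < c) {z : E} (hz : z ∈ ball x₀ R) :
    Δ (barrier x₀ R ((4 * finrank ℝ E + 24) * R ^ 2 / c)) z ≤
      c * barrier x₀ R ((4 * finrank ℝ E + 24) * R ^ 2 / c) z ^ 2 := by
  set n : ℝ := (finrank ℝ E : ℝ)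
  have hn : 0 ≤ n := Nat.cast_nonneg _
  set A := (4 * n + 24) * R ^ 2 / c with hA
  have hcA : c * A = (4 * n + 24) * R ^ 2 := by rw [hA]; field_simp
  have hA0 : 0 ≤ A := by positivity
  obtain ⟨s, hs, hnorm⟩ : ∃ s, 0 < s ∧ ‖z - x₀‖ ^ 2 = R ^ 2 - s :=
    ⟨_, sub_norm_sub_sq_pos hz, by ring⟩
  rw [laplacian_barrier hz, barrier, hnorm, sub_sub_cancel]
  have hsR : s ≤ R ^ 2 := by nlinarith [sq_nonneg ‖z - x₀‖]
  calc 4 * A * n * (s ^ 3)⁻¹ + 24 * A * (s ^ 4)⁻¹ * (R ^ 2 - s)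
      = (4 * n * s + 24 * (R ^ 2 - s)) * A / s ^ 4 := by field_simp
    _ ≤ (4 * n + 24) * R ^ 2 * A / s ^ 4 := by gcongr ?_ * _ / _; nlinarith
    _ = c * (A * (s ^ 2)⁻¹) ^ 2 := by rw [← hcA]; field_simp

end Barrier

section Osserman

variable {E : Type*} [NormedAddCommGroup E] [InnerProductSpace ℝ E] [FiniteDimensional ℝ E]

theorem le_div_of_mul_sq_le_laplacian {u : E → ℝ} {c R : ℝ} {x₀ : E} (hu : ContDiff ℝ 2 u)
    (hc : 0 < c) (hR : 0 < R) (h : ∀ x ∈ ball x₀ R, c * u x ^ 2 ≤ Δ u x) :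
    u x₀ ≤ (4 * finrank ℝ E + 24) / (c * R ^ 2) := by
  set A : ℝ := (4 * finrank ℝ E + 24) * R ^ 2 / c
  have hA : 0 < A := by positivity
  set V := barrier x₀ R A
  obtain ⟨M, hM⟩ := (isCompact_closedBall x₀ R).bddAbove_image hu.continuous.continuousOn
  obtain ⟨r, hrR, hr⟩ := exists_lt_barrier (x₀ := x₀) hR hA (M - (u x₀ - V x₀))
  have hcont : ContinuousOn (u - V) (ball x₀ R) := hu.continuous.continuousOn.sub
    fun z hz => (contDiffAt_barrier hz).continuousAt.continuousWithinAt
  obtain ⟨xm, hxm, hmax⟩ := exists_isMaxOn_ball_of_lt hR hcont hrR fun z hz hrz => by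
    have huz := hM (Set.mem_image_of_mem u (ball_subset_closedBall hz))
    have hVz := hr z hz hrz
    simp only [Pi.sub_apply]
    linarith
  have hlap : Δ u xm ≤ Δ V xm := by
    have hV : ContDiffAt ℝ 2 V xm := contDiffAt_barrier hxm
    have := (hmax.isLocalMax (isOpen_ball.mem_nhds hxm)).laplacian_nonpos (hu.contDiffAt.sub hV)
    rw [hu.contDiffAt.laplacian_sub hV] at this
    linarith
  have huV : u xm ≤ V xm := by
    refine le_of_sq_le_sq ?_ (by simp only [V, barrier]; positivity)
    have := (h xm hxm).trans (hlap.trans (laplacian_barrier_le hc hxm))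
    exact le_of_mul_le_mul_left this hc
  have hx₀ : u x₀ - V x₀ ≤ u xm - V xm := hmax (mem_ball_self hR)
  calc u x₀ ≤ V x₀ := by linarith
    _ = (4 * finrank ℝ E + 24) / (c * R ^ 2) := by
      simp only [V, barrier, A, sub_self, norm_zero]
      field_simp
      ring

end Osserman

theorem stmt_0_general (d : ℕ) (u : EuclideanSpace ℝ (Fin d) → ℝ)
    (hu : ContDiff ℝ (⊤ : ℕ∞) u) (hu0 : ∀ x, 0 ≤ u x) (c : ℝ) (hc : 0 < c)
    (h : ∀ x, c * u x ^ 2 ≤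
      ∑ i : Fin d, fderiv ℝ (fun y => fderiv ℝ u y (EuclideanSpace.single i (1 : ℝ))) x
        (EuclideanSpace.single i (1 : ℝ))) :
    ∀ x, u x = 0 := by
  have hu2 : ContDiff ℝ 2 u := hu.of_le (WithTop.coe_le_coe.2 le_top)
  have hΔ : ∀ x, c * u x ^ 2 ≤ Δ u x := fun x => by
    rw [hu2.contDiffAt.laplacian_eq_sum_fderiv_fderiv_apply (EuclideanSpace.basisFun (Fin d) ℝ)]
    simpa using h x
  intro x
  have hdecay : Tendsto (fun R : ℝ => (4 * finrank ℝ (EuclideanSpace ℝ (Fin d)) + 24) / (c * R ^ 2))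
      atTop (𝓝 0) :=
    tendsto_const_nhds.div_atTop ((tendsto_pow_atTop two_ne_zero).const_mul_atTop hc)
  refine le_antisymm (ge_of_tendsto hdecay ?_) (hu0 x)
  filter_upwards [eventually_gt_atTop 0] with R hR
  exact le_div_of_mul_sq_le_laplacian hu2 hc hR fun y _ => hΔ y

/-- Nishikawa's lemma in Euclidean space: a smooth non-negative function `u` on `ℝ^d`
satisfying `Δu ≥ c·u²` for some constant `c > 0` (with `Δ` the Euclidean Laplacian,
written as the sum of the second partial derivatives) vanishes identically. -/
theorem stmt_0 (d : ℕ) (hd : 1 ≤ d) (u : EuclideanSpace ℝ (Fin d) → ℝ)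
    (hu : ContDiff ℝ (⊤ : ℕ∞) u) (hu0 : ∀ x, 0 ≤ u x) (c : ℝ) (hc : 0 < c)
    (h : ∀ x, c * u x ^ 2 ≤
      ∑ i : Fin d, fderiv ℝ (fun y => fderiv ℝ u y (EuclideanSpace.single i (1 : ℝ))) x
        (EuclideanSpace.single i (1 : ℝ))) :
    ∀ x, u x = 0 :=
  stmt_0_general d u hu hu0 c hc h
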